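/- arXiv:2106.10143 — 2 statements merged into one kernel-verified Lean document; each statement's English description precedes it below -/
import Mathlib

section
/- K_{>0} is a two-sided ideal of the algebra K_{≥0} (i.e. K_{≥0} · K_{>0} ⊆ K_{>0} and K_{>0} · K_{≥0} ⊆ K_{>0}) and a coideal of B: Δ(K_{>0}) ⊆ K_{≥0} ⊗ K_{>0} + K_{>0} ⊗ B and ε(K_{>0}) = 0. -/
open TensorProduct

noncomputable section

/-- The standard inner product on `ℤ^θ`: `(α|ω) = Σ_i α_i ω_i`. -/
def innerZ {θ : ℕ} (α ω : Fin θ → ℤ) : ℤ := ∑ i, α i * ω i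

variable {k : Type*} [Field k] {B : Type*} [Ring B] [Bialgebra k B]

/-- The image of `p ⊗ q` inside `B ⊗[k] B`, for submodules `p, q ⊆ B`. -/
def tpSub (p q : Submodule k B) : Submodule k (B ⊗[k] B) :=
  LinearMap.range (TensorProduct.map p.subtype q.subtype)

variable {θ : ℕ}

/-- `B_{≥0} = ⊕_{(α|ω) ≥ 0} B^α`. -/
def Bge (𝒜 : (Fin θ → ℤ) → Submodule k B) (ω : Fin θ → ℤ) : Submodule k B :=
  ⨆ (α : Fin θ → ℤ) (_ : 0 ≤ innerZ α ω), 𝒜 α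

/-- `B_{>0} = ⊕_{(α|ω) > 0} B^α`. -/
def Bgt (𝒜 : (Fin θ → ℤ) → Submodule k B) (ω : Fin θ → ℤ) : Submodule k B :=
  ⨆ (α : Fin θ → ℤ) (_ : 0 < innerZ α ω), 𝒜 α

/-- `B_0 = ⊕_{(α|ω) = 0} B^α`. -/
def Bzero (𝒜 : (Fin θ → ℤ) → Submodule k B) (ω : Fin θ → ℤ) : Submodule k B :=
  ⨆ (α : Fin θ → ℤ) (_ : innerZ α ω = 0), 𝒜 α

/-- `K_{≥0} = {x ∈ B : Δ(x) ∈ B_{≥0} ⊗ B}`. -/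
def Kge (𝒜 : (Fin θ → ℤ) → Submodule k B) (ω : Fin θ → ℤ) : Submodule k B :=
  Submodule.comap (Coalgebra.comul (R := k)) (tpSub (Bge 𝒜 ω) ⊤)

/-- `K_{>0} = K_{≥0} ∩ B_{>0}`. -/
def Kgt (𝒜 : (Fin θ → ℤ) → Submodule k B) (ω : Fin θ → ℤ) : Submodule k B :=
  Kge 𝒜 ω ⊓ Bgt 𝒜 ω

/-- `K_0 = K_{≥0} ∩ B_0`. -/
def Kzero (𝒜 : (Fin θ → ℤ) → Submodule k B) (ω : Fin θ → ℤ) : Submodule k B :=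
  Kge 𝒜 ω ⊓ Bzero 𝒜 ω


/-!
The ideal property comes from `K_{≥0} ⊆ B_{≥0}` (apply `ε` to the second leg of `Δ`) together with
`(B_{≥0} ⊗ B) · (B_{≥0} ⊗ B) ⊆ B_{≥0} ⊗ B`, since `Δ` is multiplicative.

For the coideal property, the key tool is that over a field a tensor `t ∈ M ⊗ N` lies in `p ⊗ q`
as soon as all its contractions with linear forms on `N` lie in `p` and all those with linear forms
on `M` lie in `q`. Split `Δx = ∑_α (π_α ⊗ id) Δx` according to the degree of the first leg. For
`x ∈ K_{≥0}` the terms with `(α|ω) < 0` vanish. The first legs `π_α (x₁ φ(x₂))` stay in `K_{≥0}`: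
`x₁ φ(x₂) ∈ K_{≥0}` by coassociativity, and `K_{≥0}` is stable under the degree projections because
`Δ` is graded. If `(α|ω) = 0`, the second legs `ψ(π_α x₁) x₂` have the same weight as `x`, so they
lie in `B_{>0}` when `x` does; they lie in `K_{≥0}` because the left and right contractions of `Δ`
commute, which reduces this to the same weight count for `x₁ φ(x₂) ∈ B_{≥0}`.
-/

namespace TensorProduct

section Contraction

variable {R M N P : Type*} [CommSemiring R] [AddCommMonoid M] [AddCommMonoid N]
  [AddCommMonoid P] [Module R M] [Module R N] [Module R P]

def rContract (φ : Module.Dual R N) : M ⊗[R] N →ₗ[R] M :=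
  TensorProduct.rid R M ∘ₗ φ.lTensor M

def lContract (ψ : Module.Dual R M) : M ⊗[R] N →ₗ[R] N :=
  TensorProduct.lid R N ∘ₗ ψ.rTensor N

@[simp]
theorem rContract_tmul (φ : Module.Dual R N) (m : M) (n : N) :
    rContract φ (m ⊗ₜ[R] n) = φ n • m := rfl

@[simp]
theorem lContract_tmul (ψ : Module.Dual R M) (m : M) (n : N) :
    lContract ψ (m ⊗ₜ[R] n) = ψ m • n := rfl

theorem rContract_rTensor (f : M →ₗ[R] P) (φ : Module.Dual R N) (t : M ⊗[R] N) :
    rContract φ (f.rTensor N t) = f (rContract φ t) := by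
  induction t using TensorProduct.induction_on <;> simp_all

theorem lContract_rTensor (f : M →ₗ[R] P) (ψ : Module.Dual R P) (t : M ⊗[R] N) :
    lContract ψ (f.rTensor N t) = lContract (ψ ∘ₗ f) t := by
  induction t using TensorProduct.induction_on <;> simp_all

theorem lContract_lTensor (g : N →ₗ[R] P) (ψ : Module.Dual R M) (t : M ⊗[R] N) :
    lContract ψ (g.lTensor M t) = g (lContract ψ t) := by
  induction t using TensorProduct.induction_on <;> simp_all

theorem rContract_assoc_symm (φ : Module.Dual R P) (t : M ⊗[R] (N ⊗[R] P)) :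
    rContract φ ((TensorProduct.assoc R M N P).symm t) = (rContract φ).lTensor M t := by
  induction t using TensorProduct.induction_on with
  | zero => simp
  | add s t hs ht => simp_all
  | tmul m u => induction u using TensorProduct.induction_on <;> simp_all [tmul_add]

theorem lContract_assoc (ψ : Module.Dual R M) (t : (M ⊗[R] N) ⊗[R] P) :
    lContract ψ (TensorProduct.assoc R M N P t) = (lContract ψ).rTensor P t := by
  induction t using TensorProduct.induction_on with
  | zero => simp
  | add s t hs ht => simp_all
  | tmul u p =>
    induction u using TensorProduct.induction_on <;> simp_all [add_tmul, smul_tmul']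

theorem rContract_mem_of_mem_map₂ {p : Submodule R M} {q : Submodule R N} {t : M ⊗[R] N}
    (ht : t ∈ Submodule.map₂ (mk R M N) p q) (φ : Module.Dual R N) : rContract φ t ∈ p := by
  refine (Submodule.map₂_le.2 fun m hm n _ => ?_ : _ ≤ p.comap (rContract φ)) ht
  simpa using p.smul_mem _ hm

theorem lContract_mem_of_mem_map₂ {p : Submodule R M} {q : Submodule R N} {t : M ⊗[R] N}
    (ht : t ∈ Submodule.map₂ (mk R M N) p q) (ψ : Module.Dual R M) : lContract ψ t ∈ q := by
  refine (Submodule.map₂_le.2 fun m _ n hn => ?_ : _ ≤ q.comap (lContract ψ)) ht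
  simpa using q.smul_mem _ hn

end Contraction

section Map₂

variable {R M N M' N' : Type*} [CommSemiring R] [AddCommMonoid M] [AddCommMonoid N]
  [AddCommMonoid M'] [AddCommMonoid N'] [Module R M] [Module R N] [Module R M'] [Module R N']

theorem map_mem_map₂_mk {p : Submodule R M} {q : Submodule R N} {p' : Submodule R M'}
    {q' : Submodule R N'} {f : M →ₗ[R] M'} {g : N →ₗ[R] N'} (hf : p ≤ p'.comap f)
    (hg : q ≤ q'.comap g) {t : M ⊗[R] N} (ht : t ∈ Submodule.map₂ (mk R M N) p q) :
    map f g t ∈ Submodule.map₂ (mk R M' N') p' q' :=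
  (Submodule.map₂_le.2 fun _ hm _ hn => Submodule.apply_mem_map₂ (mk R M' N') (hf hm) (hg hn) :
    _ ≤ (Submodule.map₂ (mk R M' N') p' q').comap (map f g)) ht

theorem rTensor_eq_zero_of_mem_map₂ {p : Submodule R M} {q : Submodule R N} {f : M →ₗ[R] M'}
    (hf : p ≤ LinearMap.ker f) {t : M ⊗[R] N} (ht : t ∈ Submodule.map₂ (mk R M N) p q) :
    f.rTensor N t = 0 := by
  refine (Submodule.map₂_le.2 fun m hm n _ => ?_ : _ ≤ LinearMap.ker (f.rTensor N)) ht
  simp [LinearMap.mem_ker.1 (hf hm)]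

end Map₂

section Field

variable {K M N : Type*} [Field K] [AddCommGroup M] [AddCommGroup N] [Module K M] [Module K N]

theorem mem_map₂_mk_top_right_iff {p : Submodule K M} {t : M ⊗[K] N} :
    t ∈ Submodule.map₂ (mk K M N) p ⊤ ↔ ∀ φ : Module.Dual K N, rContract φ t ∈ p := by
  classical
  refine ⟨fun ht φ => rContract_mem_of_mem_map₂ ht φ, fun h => ?_⟩
  let 𝒞 := Module.Basis.ofVectorSpace K N
  have ht : t = (equivFinsuppOfBasisRight 𝒞 t).sum fun i m => m ⊗ₜ 𝒞 i := by
    rw [← equivFinsuppOfBasisRight_symm_apply, LinearEquiv.symm_apply_apply]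
  rw [ht]
  refine Submodule.sum_mem _ fun i _ => Submodule.apply_mem_map₂ _ ?_ Submodule.mem_top
  rw [equivFinsuppOfBasisRight_apply]
  exact h (𝒞.coord i)

theorem mem_map₂_mk_top_left_iff {q : Submodule K N} {t : M ⊗[K] N} :
    t ∈ Submodule.map₂ (mk K M N) ⊤ q ↔ ∀ ψ : Module.Dual K M, lContract ψ t ∈ q := by
  classical
  refine ⟨fun ht ψ => lContract_mem_of_mem_map₂ ht ψ, fun h => ?_⟩
  let ℬ := Module.Basis.ofVectorSpace K M
  have ht : t = (equivFinsuppOfBasisLeft ℬ t).sum fun i n => ℬ i ⊗ₜ n := by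
    rw [← equivFinsuppOfBasisLeft_symm_apply, LinearEquiv.symm_apply_apply]
  rw [ht]
  refine Submodule.sum_mem _ fun i _ => Submodule.apply_mem_map₂ _ Submodule.mem_top ?_
  rw [equivFinsuppOfBasisLeft_apply]
  exact h (ℬ.coord i)

theorem mem_map₂_mk_of_forall_contract {p : Submodule K M} {q : Submodule K N}
    {t : M ⊗[K] N} (hp : ∀ φ : Module.Dual K N, rContract φ t ∈ p)
    (hq : ∀ ψ : Module.Dual K M, lContract ψ t ∈ q) : t ∈ Submodule.map₂ (mk K M N) p q := by
  obtain ⟨s, rfl⟩ : t ∈ LinearMap.range (p.subtype.rTensor N) := by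
    rw [LinearMap.rTensor, range_map, Submodule.range_subtype, LinearMap.range_id]
    exact mem_map₂_mk_top_right_iff.2 hp
  have hs : s ∈ Submodule.map₂ (mk K p N) ⊤ q := by
    refine mem_map₂_mk_top_left_iff.2 fun ψ => ?_
    obtain ⟨ψ', rfl⟩ := LinearMap.exists_extend ψ
    rw [← lContract_rTensor]
    exact hq ψ'
  exact map_mem_map₂_mk (p' := p) (f := p.subtype) (g := LinearMap.id) (fun m _ => m.2) le_rfl hs

end Field

end TensorProduct

namespace DirectSum

section GradedProj

open Filter

variable {ι R M : Type*} [DecidableEq ι] [CommSemiring R] [AddCommMonoid M] [Module R M]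
  (𝒜 : ι → Submodule R M) [Decomposition 𝒜]

def gradedProj (i : ι) : M →ₗ[R] M :=
  (𝒜 i).subtype ∘ₗ component R ι (fun i => 𝒜 i) i ∘ₗ (decomposeLinearEquiv 𝒜).toLinearMap

theorem gradedProj_apply (i : ι) (x : M) : gradedProj 𝒜 i x = decompose 𝒜 x i := rfl

theorem gradedProj_mem (i : ι) (x : M) : gradedProj 𝒜 i x ∈ 𝒜 i := (decompose 𝒜 x i).2

variable {𝒜}

theorem gradedProj_of_mem_same {i : ι} {x : M} (hx : x ∈ 𝒜 i) : gradedProj 𝒜 i x = x :=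
  decompose_of_mem_same 𝒜 hx

theorem gradedProj_of_mem_ne {i j : ι} {x : M} (hx : x ∈ 𝒜 i) (hij : i ≠ j) :
    gradedProj 𝒜 j x = 0 :=
  decompose_of_mem_ne 𝒜 hx hij

theorem iSup_le_ker_gradedProj {S : ι → Prop} {i : ι} (hi : ¬ S i) :
    ⨆ (j) (_ : S j), 𝒜 j ≤ LinearMap.ker (gradedProj 𝒜 i) :=
  iSup₂_le fun _ hj _ hx => gradedProj_of_mem_ne hx fun h => hi (h ▸ hj)

variable (𝒜)

/- Stated along `atTop` rather than for one finite set of degrees, so that the tensor versions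
below follow by induction: the conditions for two summands combine. -/
theorem eventually_sum_gradedProj (x : M) :
    ∀ᶠ F in atTop, ∑ i ∈ F, gradedProj 𝒜 i x = x := by
  classical
  refine eventually_atTop.2 ⟨(decompose 𝒜 x).support, fun F hF => ?_⟩
  conv_rhs => rw [← sum_support_decompose 𝒜 x]
  exact (Finset.sum_subset hF fun i _ hi => by simpa [gradedProj_apply] using hi).symm

theorem eventually_sum_rTensor_gradedProj {N : Type*} [AddCommMonoid N] [Module R N]
    (t : M ⊗[R] N) : ∀ᶠ F in atTop, ∑ i ∈ F, (gradedProj 𝒜 i).rTensor N t = t := by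
  induction t using TensorProduct.induction_on with
  | zero => simp
  | tmul x n =>
    filter_upwards [eventually_sum_gradedProj 𝒜 x] with F hF
    simp_rw [LinearMap.rTensor_tmul, ← TensorProduct.sum_tmul, hF]
  | add s t hs ht =>
    filter_upwards [hs, ht] with F hFs hFt
    simp_rw [map_add, Finset.sum_add_distrib, hFs, hFt]

theorem eventually_sum_lTensor_gradedProj {N : Type*} [AddCommMonoid N] [Module R N]
    (t : N ⊗[R] M) : ∀ᶠ F in atTop, ∑ i ∈ F, (gradedProj 𝒜 i).lTensor N t = t := by
  induction t using TensorProduct.induction_on with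
  | zero => simp
  | tmul n x =>
    filter_upwards [eventually_sum_gradedProj 𝒜 x] with F hF
    simp_rw [LinearMap.lTensor_tmul, ← TensorProduct.tmul_sum, hF]
  | add s t hs ht =>
    filter_upwards [hs, ht] with F hFs hFt
    simp_rw [map_add, Finset.sum_add_distrib, hFs, hFt]

theorem mem_of_forall_rTensor_gradedProj_mem {N : Type*} [AddCommMonoid N] [Module R N]
    {T : Submodule R (M ⊗[R] N)} {t : M ⊗[R] N}
    (h : ∀ i, (gradedProj 𝒜 i).rTensor N t ∈ T) : t ∈ T := by
  obtain ⟨F, hF⟩ := (eventually_sum_rTensor_gradedProj 𝒜 t).exists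
  exact hF ▸ Submodule.sum_mem _ fun i _ => h i

theorem eq_zero_of_forall_lTensor_gradedProj_eq_zero {N : Type*} [AddCommMonoid N]
    [Module R N] {t : N ⊗[R] M} (h : ∀ i, (gradedProj 𝒜 i).lTensor N t = 0) : t = 0 := by
  obtain ⟨F, hF⟩ := (eventually_sum_lTensor_gradedProj 𝒜 t).exists
  rw [← hF]
  exact Finset.sum_eq_zero fun i _ => h i

variable {𝒜}

theorem mem_iSup_of_gradedProj_eq_zero {S : ι → Prop} {x : M}
    (h : ∀ i, ¬ S i → gradedProj 𝒜 i x = 0) : x ∈ ⨆ (i) (_ : S i), 𝒜 i := by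
  obtain ⟨F, hF⟩ := (eventually_sum_gradedProj 𝒜 x).exists
  rw [← hF]
  refine Submodule.sum_mem _ fun i _ => ?_
  by_cases hi : S i
  · exact Submodule.mem_iSup_of_mem i (Submodule.mem_iSup_of_mem hi (gradedProj_mem 𝒜 i x))
  · rw [h i hi]
    exact zero_mem _

end GradedProj

end DirectSum

open DirectSum

section Coalgebra

variable {R C : Type*} [CommSemiring R] [AddCommMonoid C] [Module R C] [Coalgebra R C]

local notation "Δ" => Coalgebra.comul (R := R) (A := C)

theorem comul_rContract_comul (φ : Module.Dual R C) (x : C) :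
    Δ (rContract φ (Δ x)) = (rContract φ ∘ₗ Δ).lTensor C (Δ x) := by
  rw [← rContract_rTensor, ← Coalgebra.coassoc_symm_apply, rContract_assoc_symm,
    LinearMap.lTensor_comp, LinearMap.comp_apply]

theorem comul_lContract_comul (ψ : Module.Dual R C) (x : C) :
    Δ (lContract ψ (Δ x)) = (lContract ψ ∘ₗ Δ).rTensor C (Δ x) := by
  rw [← lContract_lTensor, ← Coalgebra.coassoc_apply, lContract_assoc,
    LinearMap.rTensor_comp, LinearMap.comp_apply]

theorem rContract_comul_lContract_comul (φ ψ : Module.Dual R C) (x : C) :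
    rContract φ (Δ (lContract ψ (Δ x))) = lContract ψ (Δ (rContract φ (Δ x))) := by
  rw [comul_lContract_comul, rContract_rTensor, LinearMap.comp_apply]

theorem rContract_counit_comul (x : C) : rContract Coalgebra.counit (Δ x) = x := by
  simp [rContract, Coalgebra.lTensor_counit_comul]

theorem mem_of_comul_mem_map₂_mk_top {p : Submodule R C} {x : C}
    (hx : Δ x ∈ Submodule.map₂ (mk R C C) p ⊤) : x ∈ p := by
  rw [← rContract_counit_comul (R := R) x]
  exact rContract_mem_of_mem_map₂ hx _

theorem comul_rContract_comul_mem {p : Submodule R C} {x : C}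
    (hx : Δ x ∈ Submodule.map₂ (mk R C C) p ⊤) (φ : Module.Dual R C) :
    Δ (rContract φ (Δ x)) ∈ Submodule.map₂ (mk R C C) p ⊤ := by
  rw [comul_rContract_comul]
  exact map_mem_map₂_mk (f := LinearMap.id) le_rfl (fun _ _ => Submodule.mem_top) hx

end Coalgebra

section GradedCoalgebra

variable {ι R C : Type*} [AddMonoid ι] [CommSemiring R] [AddCommMonoid C] [Module R C]
  [Coalgebra R C]

local notation "Δ" => Coalgebra.comul (R := R) (A := C)

def IsGradedComul (𝒜 : ι → Submodule R C) : Prop :=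
  ∀ γ, ∀ x ∈ 𝒜 γ,
    Δ x ∈ ⨆ (pq : ι × ι) (_ : pq.1 + pq.2 = γ), Submodule.map₂ (mk R C C) (𝒜 pq.1) (𝒜 pq.2)

theorem counit_eq_zero_of_mem_iSup {𝒜 : ι → Submodule R C}
    (hε : ∀ γ, γ ≠ 0 → ∀ x ∈ 𝒜 γ, Coalgebra.counit (R := R) x = 0) {S : ι → Prop}
    (h0 : ¬ S 0) {x : C} (hx : x ∈ ⨆ (i) (_ : S i), 𝒜 i) : Coalgebra.counit (R := R) x = 0 :=
  (iSup₂_le fun γ hγ y hy => hε γ (fun h => h0 (h ▸ hγ)) y hy :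
    _ ≤ LinearMap.ker (Coalgebra.counit (R := R) (A := C))) hx

variable [DecidableEq ι] {𝒜 : ι → Submodule R C} [Decomposition 𝒜]

namespace IsGradedComul

theorem map_gradedProj_comul_eq_zero (h : IsGradedComul 𝒜) {β γ δ : ι} {x : C}
    (hx : x ∈ 𝒜 δ) (hne : β + γ ≠ δ) : map (gradedProj 𝒜 β) (gradedProj 𝒜 γ) (Δ x) = 0 := by
  refine (iSup₂_le fun pq hpq => Submodule.map₂_le.2 fun a ha b hb => ?_ :
    _ ≤ LinearMap.ker (map (gradedProj 𝒜 β) (gradedProj 𝒜 γ))) (h δ x hx)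
  rw [LinearMap.mem_ker, mk_apply, map_tmul]
  by_cases h1 : pq.1 = β
  · rw [gradedProj_of_mem_ne hb fun h2 => hne (by rw [← h1, ← h2, hpq]), tmul_zero]
  · rw [gradedProj_of_mem_ne ha h1, zero_tmul]

theorem map_gradedProj_comul_gradedProj (h : IsGradedComul 𝒜) (α β γ : ι) (x : C) :
    map (gradedProj 𝒜 β) (gradedProj 𝒜 γ) (Δ (gradedProj 𝒜 α x)) =
      if β + γ = α then map (gradedProj 𝒜 β) (gradedProj 𝒜 γ) (Δ x) else 0 := by
  induction x using Decomposition.inductionOn 𝒜 with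
  | zero => simp
  | @homogeneous δ x =>
    obtain ⟨x, hx⟩ := x
    by_cases hδ : δ = α
    · subst hδ
      rw [gradedProj_of_mem_same hx]
      split_ifs with hβγ
      · rfl
      · exact h.map_gradedProj_comul_eq_zero hx hβγ
    · rw [gradedProj_of_mem_ne hx hδ, map_zero, map_zero]
      split_ifs with hβγ
      · exact (h.map_gradedProj_comul_eq_zero hx (hβγ ▸ Ne.symm hδ)).symm
      · rfl
  | add x y hx hy => split_ifs at * <;> simp_all

theorem lContract_gradedProj_comul_mem (h : IsGradedComul 𝒜) {S : ι → Prop} {α : ι}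
    (hS : ∀ γ, S (α + γ) → S γ) (ψ : Module.Dual R C) {y : C}
    (hy : y ∈ ⨆ (i) (_ : S i), 𝒜 i) :
    lContract (ψ ∘ₗ gradedProj 𝒜 α) (Δ y) ∈ ⨆ (i) (_ : S i), 𝒜 i := by
  set p := ⨆ (i) (_ : S i), 𝒜 i
  refine (iSup₂_le fun δ hδ x hx => ?_ :
    p ≤ p.comap (lContract (ψ ∘ₗ gradedProj 𝒜 α) ∘ₗ Δ)) hy
  refine (iSup₂_le fun pq hpq => Submodule.map₂_le.2 fun a ha b hb => ?_ :
    _ ≤ p.comap (lContract (ψ ∘ₗ gradedProj 𝒜 α))) (h δ x hx)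
  rw [Submodule.mem_comap, mk_apply, lContract_tmul, LinearMap.comp_apply]
  by_cases h1 : pq.1 = α
  · subst h1
    exact p.smul_mem _ (Submodule.mem_iSup_of_mem pq.2
      (Submodule.mem_iSup_of_mem (hS _ (hpq ▸ hδ)) hb))
  · rw [gradedProj_of_mem_ne ha h1, map_zero, zero_smul]
    exact zero_mem _

end IsGradedComul

end GradedCoalgebra

section GradedCoalgebraOverField

variable {ι K C : Type*} [AddMonoid ι] [DecidableEq ι] [Field K] [AddCommGroup C]
  [Module K C] [Coalgebra K C] {𝒜 : ι → Submodule K C} [Decomposition 𝒜]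

local notation "Δ" => Coalgebra.comul (R := K) (A := C)

theorem IsGradedComul.comul_gradedProj_mem (h : IsGradedComul 𝒜) {S : ι → Prop} {x : C}
    (hx : Δ x ∈ Submodule.map₂ (mk K C C) (⨆ (i) (_ : S i), 𝒜 i) ⊤) (α : ι) :
    Δ (gradedProj 𝒜 α x) ∈ Submodule.map₂ (mk K C C) (⨆ (i) (_ : S i), 𝒜 i) ⊤ := by
  refine mem_map₂_mk_top_right_iff.2 fun φ =>
    mem_iSup_of_gradedProj_eq_zero (𝒜 := 𝒜) fun β hβ => ?_
  rw [← rContract_rTensor]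
  suffices (gradedProj 𝒜 β).rTensor C (Δ (gradedProj 𝒜 α x)) = 0 by rw [this, map_zero]
  refine eq_zero_of_forall_lTensor_gradedProj_eq_zero 𝒜 fun γ => ?_
  rw [← LinearMap.comp_apply, LinearMap.lTensor_comp_rTensor,
    h.map_gradedProj_comul_gradedProj, ← LinearMap.lTensor_comp_rTensor]
  split_ifs
  · rw [LinearMap.comp_apply, rTensor_eq_zero_of_mem_map₂ (iSup_le_ker_gradedProj hβ) hx,
      map_zero]
  · rfl

end GradedCoalgebraOverField

section GradedAlgebra

variable {ι R A : Type*} [Add ι] [CommSemiring R] [Semiring A] [Algebra R A]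

theorem iSup_mul_iSup_le {𝒜 : ι → Submodule R A} [SetLike.GradedMul 𝒜]
    {S₁ S₂ S₃ : ι → Prop} (h : ∀ a b, S₁ a → S₂ b → S₃ (a + b)) :
    (⨆ (a) (_ : S₁ a), 𝒜 a) * (⨆ (b) (_ : S₂ b), 𝒜 b) ≤ ⨆ (c) (_ : S₃ c), 𝒜 c := by
  simp only [Submodule.iSup_mul, Submodule.mul_iSup, iSup_le_iff]
  intro b hb a ha
  exact (Submodule.mul_le.2 fun x hx y hy => SetLike.GradedMul.mul_mem hx hy).trans
    (le_iSup₂ (f := fun c (_ : S₃ c) => 𝒜 c) _ (h a b ha hb))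

theorem map₂_mk_top_mul_le {p : Submodule R A} (hp : p * p ≤ p) :
    Submodule.map₂ (mk R A A) p ⊤ * Submodule.map₂ (mk R A A) p ⊤ ≤
      Submodule.map₂ (mk R A A) p ⊤ := by
  rw [Submodule.map₂_eq_span_image2, Submodule.span_mul_span, Submodule.span_le]
  rintro _ ⟨_, ⟨a, ha, b, -, rfl⟩, _, ⟨c, hc, d, -, rfl⟩, rfl⟩
  exact Submodule.subset_span ⟨a * c, hp (Submodule.mul_mem_mul ha hc), b * d, trivial,
    (Algebra.TensorProduct.tmul_mul_tmul _ _ _ _).symm⟩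

end GradedAlgebra

theorem innerZ_add (α β ω : Fin θ → ℤ) : innerZ (α + β) ω = innerZ α ω + innerZ β ω := by
  simp [innerZ, add_mul, Finset.sum_add_distrib]

theorem innerZ_zero_left (ω : Fin θ → ℤ) : innerZ 0 ω = 0 := by
  simp [innerZ]

theorem tpSub_eq_map₂ (p q : Submodule k B) : tpSub p q = Submodule.map₂ (mk k B B) p q :=
  range_mapIncl p q

section PositivePart

local notation "Δ" => Coalgebra.comul (R := k) (A := B)

variable {𝒜 : (Fin θ → ℤ) → Submodule k B} {ω : Fin θ → ℤ}

theorem mem_Kge_iff {x : B} :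
    x ∈ Kge 𝒜 ω ↔ Δ x ∈ Submodule.map₂ (mk k B B) (Bge 𝒜 ω) ⊤ := by
  rw [Kge, Submodule.mem_comap, tpSub_eq_map₂]

theorem mem_Bge_of_mem_Kge {x : B} (hx : x ∈ Kge 𝒜 ω) : x ∈ Bge 𝒜 ω :=
  mem_of_comul_mem_map₂_mk_top (mem_Kge_iff.1 hx)

theorem rContract_comul_mem_Kge {x : B} (hx : x ∈ Kge 𝒜 ω) (φ : Module.Dual k B) :
    rContract φ (Δ x) ∈ Kge 𝒜 ω :=
  mem_Kge_iff.2 (comul_rContract_comul_mem (mem_Kge_iff.1 hx) φ)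

section GradedMul

variable [SetLike.GradedMul 𝒜]

theorem Bge_mul_Bge_le : Bge 𝒜 ω * Bge 𝒜 ω ≤ Bge 𝒜 ω :=
  iSup_mul_iSup_le fun a b ha hb => by rw [innerZ_add]; omega

theorem Bge_mul_Bgt_le : Bge 𝒜 ω * Bgt 𝒜 ω ≤ Bgt 𝒜 ω :=
  iSup_mul_iSup_le fun a b ha hb => by rw [innerZ_add]; omega

theorem Bgt_mul_Bge_le : Bgt 𝒜 ω * Bge 𝒜 ω ≤ Bgt 𝒜 ω :=
  iSup_mul_iSup_le fun a b ha hb => by rw [innerZ_add]; omega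

theorem mul_mem_Kge {x y : B} (hx : x ∈ Kge 𝒜 ω) (hy : y ∈ Kge 𝒜 ω) : x * y ∈ Kge 𝒜 ω := by
  rw [mem_Kge_iff, Bialgebra.comul_mul]
  exact map₂_mk_top_mul_le Bge_mul_Bge_le
    (Submodule.mul_mem_mul (mem_Kge_iff.1 hx) (mem_Kge_iff.1 hy))

end GradedMul

variable [Decomposition 𝒜]

theorem IsGradedComul.gradedProj_mem_Kge (h𝒜 : IsGradedComul 𝒜) {x : B}
    (hx : x ∈ Kge 𝒜 ω) (α : Fin θ → ℤ) : gradedProj 𝒜 α x ∈ Kge 𝒜 ω :=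
  mem_Kge_iff.2 (h𝒜.comul_gradedProj_mem (mem_Kge_iff.1 hx) α)

theorem IsGradedComul.lContract_gradedProj_comul_mem_Kgt (h𝒜 : IsGradedComul 𝒜)
    {α : Fin θ → ℤ} (hα : innerZ α ω = 0) {x : B} (hx : x ∈ Kgt 𝒜 ω)
    (ψ : Module.Dual k B) : lContract (ψ ∘ₗ gradedProj 𝒜 α) (Δ x) ∈ Kgt 𝒜 ω := by
  have hweight (γ) : innerZ (α + γ) ω = innerZ γ ω := by rw [innerZ_add, hα, zero_add]
  refine ⟨mem_Kge_iff.2 (mem_map₂_mk_top_right_iff.2 fun φ => ?_), ?_⟩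
  · rw [rContract_comul_lContract_comul]
    exact h𝒜.lContract_gradedProj_comul_mem (fun γ => by rw [hweight]; exact id) ψ
      (mem_Bge_of_mem_Kge (rContract_comul_mem_Kge hx.1 φ))
  · exact h𝒜.lContract_gradedProj_comul_mem (fun γ => by rw [hweight]; exact id) ψ hx.2

theorem IsGradedComul.comul_mem_of_mem_Kgt (h𝒜 : IsGradedComul 𝒜) {x : B}
    (hx : x ∈ Kgt 𝒜 ω) : Δ x ∈ tpSub (Kge 𝒜 ω) (Kgt 𝒜 ω) ⊔ tpSub (Kgt 𝒜 ω) ⊤ := by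
  refine mem_of_forall_rTensor_gradedProj_mem 𝒜 fun α => ?_
  have hleft (φ : Module.Dual k B) :
      rContract φ ((gradedProj 𝒜 α).rTensor B (Δ x)) ∈ Kge 𝒜 ω := by
    rw [rContract_rTensor]
    exact h𝒜.gradedProj_mem_Kge (rContract_comul_mem_Kge hx.1 φ) α
  rcases lt_trichotomy (innerZ α ω) 0 with hneg | hzero | hpos
  · rw [rTensor_eq_zero_of_mem_map₂
      (iSup_le_ker_gradedProj (S := fun β => 0 ≤ innerZ β ω) (not_le.2 hneg))
      (mem_Kge_iff.1 hx.1)]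
    exact zero_mem _
  · refine Submodule.mem_sup_left ?_
    rw [tpSub_eq_map₂]
    refine mem_map₂_mk_of_forall_contract hleft fun ψ => ?_
    rw [lContract_rTensor]
    exact h𝒜.lContract_gradedProj_comul_mem_Kgt hzero hx ψ
  · refine Submodule.mem_sup_right ?_
    rw [tpSub_eq_map₂, mem_map₂_mk_top_right_iff]
    refine fun φ => ⟨hleft φ, ?_⟩
    rw [rContract_rTensor]
    exact Submodule.mem_iSup_of_mem α (Submodule.mem_iSup_of_mem hpos (gradedProj_mem 𝒜 α _))

end PositivePart

theorem statement5_general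
    (𝒜 : (Fin θ → ℤ) → Submodule k B)
    (hinternal : DirectSum.IsInternal 𝒜)
    (hmul : ∀ (α β : Fin θ → ℤ) (x y : B), x ∈ 𝒜 α → y ∈ 𝒜 β → x * y ∈ 𝒜 (α + β))
    (hcomul : ∀ (γ : Fin θ → ℤ), ∀ x ∈ 𝒜 γ,
      Coalgebra.comul (R := k) x ∈
        ⨆ (pq : (Fin θ → ℤ) × (Fin θ → ℤ)) (_ : pq.1 + pq.2 = γ), tpSub (𝒜 pq.1) (𝒜 pq.2))
    (hcounit : ∀ (γ : Fin θ → ℤ), γ ≠ 0 → ∀ x ∈ 𝒜 γ, Coalgebra.counit (R := k) x = 0)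
    (ω : Fin θ → ℤ) :
    (∀ x y : B, x ∈ Kge 𝒜 ω → y ∈ Kgt 𝒜 ω → x * y ∈ Kgt 𝒜 ω) ∧
    (∀ x y : B, x ∈ Kgt 𝒜 ω → y ∈ Kge 𝒜 ω → x * y ∈ Kgt 𝒜 ω) ∧
    (∀ x ∈ Kgt 𝒜 ω, Coalgebra.comul (R := k) x ∈
      tpSub (Kge 𝒜 ω) (Kgt 𝒜 ω) ⊔ tpSub (Kgt 𝒜 ω) ⊤) ∧
    (∀ x ∈ Kgt 𝒜 ω, Coalgebra.counit (R := k) x = 0) := by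
  have := hinternal.chooseDecomposition
  have : SetLike.GradedMul 𝒜 := ⟨fun i j _ _ => hmul i j _ _⟩
  have h𝒜 : IsGradedComul 𝒜 := by
    simp only [tpSub_eq_map₂] at hcomul
    exact hcomul
  refine ⟨fun x y hx hy => ⟨mul_mem_Kge hx hy.1, ?_⟩,
    fun x y hx hy => ⟨mul_mem_Kge hx.1 hy, ?_⟩,
    fun x hx => h𝒜.comul_mem_of_mem_Kgt hx,
    fun x hx => counit_eq_zero_of_mem_iSup hcounit (by simp [innerZ_zero_left]) hx.2⟩
  · exact Bge_mul_Bgt_le (Submodule.mul_mem_mul (mem_Bge_of_mem_Kge hx) hy.2)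
  · exact Bgt_mul_Bge_le (Submodule.mul_mem_mul hx.2 (mem_Bge_of_mem_Kge hy))

/-- `K_{>0}` is a two-sided ideal of the algebra `K_{≥0}` and a coideal of `B`:
`Δ(K_{>0}) ⊆ K_{≥0} ⊗ K_{>0} + K_{>0} ⊗ B` and `ε(K_{>0}) = 0`. -/
theorem statement5 (hθ : 0 < θ)
    (𝒜 : (Fin θ → ℤ) → Submodule k B)
    (hinternal : DirectSum.IsInternal 𝒜)
    (hone : (1 : B) ∈ 𝒜 0)
    (hmul : ∀ (α β : Fin θ → ℤ) (x y : B), x ∈ 𝒜 α → y ∈ 𝒜 β → x * y ∈ 𝒜 (α + β))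
    (hcomul : ∀ (γ : Fin θ → ℤ), ∀ x ∈ 𝒜 γ,
      Coalgebra.comul (R := k) x ∈
        ⨆ (pq : (Fin θ → ℤ) × (Fin θ → ℤ)) (_ : pq.1 + pq.2 = γ), tpSub (𝒜 pq.1) (𝒜 pq.2))
    (hcounit : ∀ (γ : Fin θ → ℤ), γ ≠ 0 → ∀ x ∈ 𝒜 γ, Coalgebra.counit (R := k) x = 0)
    (ω : Fin θ → ℤ) :
    (∀ x y : B, x ∈ Kge 𝒜 ω → y ∈ Kgt 𝒜 ω → x * y ∈ Kgt 𝒜 ω) ∧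
    (∀ x y : B, x ∈ Kgt 𝒜 ω → y ∈ Kge 𝒜 ω → x * y ∈ Kgt 𝒜 ω) ∧
    (∀ x ∈ Kgt 𝒜 ω, Coalgebra.comul (R := k) x ∈
      tpSub (Kge 𝒜 ω) (Kgt 𝒜 ω) ⊔ tpSub (Kgt 𝒜 ω) ⊤) ∧
    (∀ x ∈ Kgt 𝒜 ω, Coalgebra.counit (R := k) x = 0) :=
  statement5_general 𝒜 hinternal hmul hcomul hcounit ω
end
end

section
/- If q is a braiding matrix of Cartan type, then for every index i the reflected matrix ρ_i q is again of Cartan type and C^{ρ_i q} = C^q. In particular, every braiding matrix of Cartan type is standard (its generalized Cartan matrix is unchanged under arbitrary finite sequences of reflections). -/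
noncomputable section

variable {k : Type*} [Field k]

/-- The quantum number `(n)_t = 1 + t + ⋯ + t^{n-1}`. -/
def qnum (t : k) (n : ℕ) : k := ∑ j ∈ Finset.range n, t ^ j

/-- `q̃_{ij} = q_{ij} q_{ji}`. -/
def qt {θ : ℕ} (q : Fin θ → Fin θ → k) (i j : Fin θ) : k := q i j * q j i

/-- One can reflect `q` at `i`: for every `j ≠ i` there is an `n ∈ ℕ₀` with
`(n+1)_{q_{ii}} (1 − q_{ii}^n q̃_{ij}) = 0`. -/
def CanReflect {θ : ℕ} (q : Fin θ → Fin θ → k) (i : Fin θ) : Prop :=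
  ∀ j, j ≠ i → ∃ n : ℕ, qnum (q i i) (n + 1) * (1 - q i i ^ n * qt q i j) = 0

/-- The entry `c^q_{ij}` of the generalized Cartan matrix of `q`:
`c^q_{ii} = 2` and `c^q_{ij} = −min{n ∈ ℕ₀ : (n+1)_{q_{ii}}(1 − q_{ii}^n q̃_{ij}) = 0}`
for `j ≠ i`. -/
def cq {θ : ℕ} (q : Fin θ → Fin θ → k) (i j : Fin θ) : ℤ :=
  if i = j then 2
  else -((sInf {n : ℕ | qnum (q i i) (n + 1) * (1 - q i i ^ n * qt q i j) = 0} : ℕ) : ℤ)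

/-- `q` is of Cartan type: one can reflect `q` at every `i` and
`q_{ii}^{c^q_{ij}} = q̃_{ij}` for all `i ≠ j`. -/
def IsCartanType {θ : ℕ} (q : Fin θ → Fin θ → k) : Prop :=
  (∀ i, CanReflect q i) ∧ ∀ i j, i ≠ j → q i i ^ cq q i j = qt q i j

/-- The reflected braiding matrix `ρ_i q`, with entries
`t_{jl} = q_{jl} q_{il}^{−c^q_{ij}} q_{ji}^{−c^q_{il}} q_{ii}^{c^q_{ij} c^q_{il}}`. -/
def rho {θ : ℕ} (q : Fin θ → Fin θ → k) (i : Fin θ) : Fin θ → Fin θ → k :=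
  fun j l =>
    q j l * q i l ^ (-(cq q i j)) * q j i ^ (-(cq q i l)) * q i i ^ (cq q i j * cq q i l)

/-- The reflection `s_i^q` of `ℤ^θ`, determined by `s_i^q(α_j) = α_j − c^q_{ij} α_i`
on the canonical basis. -/
def sRef {θ : ℕ} (q : Fin θ → Fin θ → k) (i : Fin θ) : (Fin θ → ℤ) → (Fin θ → ℤ) :=
  fun v l => v l - (if l = i then ∑ j, cq q i j * v j else 0)

/-- `x` is a root of unity. -/
def IsRootOfUnity (x : k) : Prop := ∃ N : ℕ, 0 < N ∧ x ^ N = 1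

-- auxiliary
lemma cq_diag {θ : ℕ} (q : Fin θ → Fin θ → k) (i : Fin θ) : cq q i i = 2 := if_pos rfl

lemma qt_symm {θ : ℕ} (q : Fin θ → Fin θ → k) (i j : Fin θ) : qt q i j = qt q j i :=
  mul_comm _ _

lemma rho_ne_zero {θ : ℕ} (q : Fin θ → Fin θ → k) (hq : ∀ i j, q i j ≠ 0) (i j l : Fin θ) :
    rho q i j l ≠ 0 := by
  refine mul_ne_zero (mul_ne_zero (mul_ne_zero (hq j l) ?_) ?_) ?_ <;>
    exact zpow_ne_zero _ (hq _ _)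

lemma rho_diag {θ : ℕ} (q : Fin θ → Fin θ → k) (hq : ∀ i j, q i j ≠ 0)
    (hC : IsCartanType q) (i j : Fin θ) : rho q i j j = q j j := by
  unfold rho
  by_cases hji : j = i
  · subst hji
    rw [cq_diag]
    rw [show q j j * q j j ^ (-(2:ℤ)) * q j j ^ (-(2:ℤ)) * q j j ^ ((2:ℤ)*2)
        = q j j ^ ((1:ℤ) + -2 + -2 + 2*2) by
      rw [zpow_add₀ (hq j j), zpow_add₀ (hq j j), zpow_add₀ (hq j j), zpow_one]]
    norm_num
  · set a := cq q i j with ha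
    have h2 : q i i ^ a = q i j * q j i := hC.2 i j (fun h => hji h.symm)
    have e : q i j ^ (-a) * q j i ^ (-a) = q i i ^ (a * -a) := by
      rw [zpow_mul, h2, mul_zpow]
    calc q j j * q i j ^ (-a) * q j i ^ (-a) * q i i ^ (a * a)
        = q j j * (q i j ^ (-a) * q j i ^ (-a)) * q i i ^ (a * a) := by ring
      _ = q j j * q i i ^ (a * -a) * q i i ^ (a * a) := by rw [e]
      _ = q j j * q i i ^ (a * -a + a * a) := by rw [zpow_add₀ (hq i i)]; ring
      _ = q j j := by rw [show a * -a + a * a = 0 by ring, zpow_zero, mul_one]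

lemma rho_qt {θ : ℕ} (q : Fin θ → Fin θ → k) (hq : ∀ i j, q i j ≠ 0)
    (hC : IsCartanType q) (i j l : Fin θ) : qt (rho q i) j l = qt q j l := by
  by_cases hjl : j = l
  · subst hjl
    unfold qt
    rw [rho_diag q hq hC]
  · -- j ≠ l
    have key : ∀ m : Fin θ, m ≠ i → qt (rho q i) i m = qt q i m := by
      intro m hm
      have hb : q i i ^ cq q i m = q i m * q m i := hC.2 i m (fun h => hm h.symm)
      set b := cq q i m with hbdef
      unfold qt rho
      rw [cq_diag]
      have e1 : q i m ^ (-(2:ℤ)) * q m i ^ (-(2:ℤ)) = q i i ^ (b * -2) := by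
        rw [zpow_mul, hb, mul_zpow]
      calc (q i m * q i m ^ (-(2:ℤ)) * q i i ^ (-b) * q i i ^ (2 * b)) *
            (q m i * q i i ^ (-b) * q m i ^ (-(2:ℤ)) * q i i ^ (b * 2))
          = (q i m * q m i) * ((q i m ^ (-(2:ℤ)) * q m i ^ (-(2:ℤ))) *
              (q i i ^ (-b) * (q i i ^ (2 * b) * (q i i ^ (-b) * q i i ^ (b * 2))))) := by
            ring
        _ = q i m * q m i := by
            rw [e1, ← zpow_add₀ (hq i i), ← zpow_add₀ (hq i i), ← zpow_add₀ (hq i i),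
              ← zpow_add₀ (hq i i),
              show b * -2 + (-b + (2 * b + (-b + b * 2))) = 0 by ring, zpow_zero, mul_one]
    by_cases hji : j = i
    · subst hji; exact key l (fun h => hjl h.symm)
    by_cases hli : l = i
    · subst hli
      rw [qt_symm, key j hji, qt_symm]
    · -- j, l ≠ i, j ≠ l
      set a := cq q i j with hadef
      set b := cq q i l with hbdef
      have ha2 : q i i ^ a = q i j * q j i := hC.2 i j (fun h => hji h.symm)
      have hb2 : q i i ^ b = q i l * q l i := hC.2 i l (fun h => hli h.symm)
      unfold qt rho
      have e1 : q i l ^ (-a) * q l i ^ (-a) = q i i ^ (b * -a) := by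
        rw [zpow_mul, hb2, mul_zpow]
      have e2 : q j i ^ (-b) * q i j ^ (-b) = q i i ^ (a * -b) := by
        rw [zpow_mul, ha2, mul_zpow]; ring
      calc (q j l * q i l ^ (-a) * q j i ^ (-b) * q i i ^ (a * b)) *
            (q l j * q i j ^ (-b) * q l i ^ (-a) * q i i ^ (b * a))
          = (q j l * q l j) * ((q i l ^ (-a) * q l i ^ (-a)) *
              ((q j i ^ (-b) * q i j ^ (-b)) * (q i i ^ (a * b) * q i i ^ (b * a)))) := by
            ring
        _ = q j l * q l j := by
            rw [e1, e2, ← zpow_add₀ (hq i i), ← zpow_add₀ (hq i i), ← zpow_add₀ (hq i i),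
              show b * -a + (a * -b + (a * b + b * a)) = 0 by ring, zpow_zero, mul_one]

lemma cq_congr {θ : ℕ} {q q' : Fin θ → Fin θ → k}
    (hd : ∀ j, q' j j = q j j) (ht : ∀ j l, qt q' j l = qt q j l) (j l : Fin θ) :
    cq q' j l = cq q j l := by
  unfold cq
  rw [hd, ht]

lemma isCartan_congr {θ : ℕ} {q q' : Fin θ → Fin θ → k}
    (hd : ∀ j, q' j j = q j j) (ht : ∀ j l, qt q' j l = qt q j l)
    (hC : IsCartanType q) : IsCartanType q' := by
  obtain ⟨h1, h2⟩ := hC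
  constructor
  · intro i j hji
    obtain ⟨n, hn⟩ := h1 i j hji
    exact ⟨n, by rw [hd, ht]; exact hn⟩
  · intro i j hij
    rw [hd, ht, cq_congr hd ht]
    exact h2 i j hij

lemma cq_rho {θ : ℕ} (q : Fin θ → Fin θ → k) (hq : ∀ i j, q i j ≠ 0)
    (hC : IsCartanType q) (i j l : Fin θ) : cq (rho q i) j l = cq q j l :=
  cq_congr (rho_diag q hq hC i) (rho_qt q hq hC i) j l

lemma isCartan_rho {θ : ℕ} (q : Fin θ → Fin θ → k) (hq : ∀ i j, q i j ≠ 0)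
    (hC : IsCartanType q) (i : Fin θ) : IsCartanType (rho q i) :=
  isCartan_congr (rho_diag q hq hC i) (rho_qt q hq hC i) hC

lemma foldl_aux {θ : ℕ} (L : List (Fin θ)) :
    ∀ q : Fin θ → Fin θ → k, (∀ i j, q i j ≠ 0) → IsCartanType q →
      (∀ i j, (L.foldl rho q) i j ≠ 0) ∧ IsCartanType (L.foldl rho q) ∧
        ∀ j l, cq (L.foldl rho q) j l = cq q j l := by
  induction L with
  | nil => exact fun q hq hC => ⟨hq, hC, fun _ _ => rfl⟩
  | cons a L ih =>
    intro q hq hC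
    simp only [List.foldl_cons]
    obtain ⟨h1, h2, h3⟩ := ih (rho q a) (rho_ne_zero q hq a) (isCartan_rho q hq hC a)
    exact ⟨h1, h2, fun j l => (h3 j l).trans (cq_rho q hq hC a j l)⟩


/-- If `q` is of Cartan type, then every reflection `ρ_i q` is again of Cartan type with the
same generalized Cartan matrix; in particular `q` is standard: its generalized Cartan matrix
is unchanged under arbitrary finite sequences of reflections. -/
theorem statement11 [IsAlgClosed k] [CharZero k] {θ : ℕ}
    (q : Fin θ → Fin θ → k) (hq : ∀ i j, q i j ≠ 0) (hC : IsCartanType q) :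
    (∀ i : Fin θ, IsCartanType (rho q i) ∧ ∀ j l, cq (rho q i) j l = cq q j l) ∧
    (∀ L : List (Fin θ), IsCartanType (L.foldl rho q) ∧
      ∀ j l, cq (L.foldl rho q) j l = cq q j l) := by
  refine ⟨fun i => ⟨isCartan_rho q hq hC i, cq_rho q hq hC i⟩, fun L => ?_⟩
  obtain ⟨_, h2, h3⟩ := foldl_aux L q hq hC
  exact ⟨h2, h3⟩
end
end
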